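/- arXiv:2605.13035 — 2 statements merged into one kernel-verified Lean document; each statement's English description precedes it below -/
import Mathlib

section
/- Suppose agents destined to a common goal g have strictly increasing arrival times T_{i_1} < ... < T_{i_m}, and suppose there is a strict total order ≺ on order labels such that whenever o_{i_a} ≺ o_{i_b}, agent i_b's arrival time satisfies T_{i_b} ≥ T_{i_a} + k + 1 for every agent i_a with the higher-priority label. Then the arrival sequence of labels (o_{i_1}, ..., o_{i_m}) is order-contiguous. -/
/-- Destination blocking (arrivals of lower-priority orders come more than `k` steps
after every arrival of a higher-priority order) implies order-contiguity of the
arrival sequence. -/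
theorem stmt_2 {O : Type*} {m : ℕ} (o : Fin m → O) (T : Fin m → ℕ) (k : ℕ)
    (prec : O → O → Prop) [IsStrictTotalOrder O prec]
    (hT : StrictMono T)
    (hblock : ∀ a b : Fin m, prec (o a) (o b) → T a + k < T b) :
    ∀ p q r : Fin m, p < q → q < r → o p = o r → o p = o q := by
  intro p q r hpq hqr hpr
  rcases trichotomous_of prec (o p) (o q) with h | h | h
  · have h1 := hblock r q (hpr ▸ h)
    have := hT hqr
    omega
  · exact h
  · have h1 := hblock q p h
    have := hT hpq
    omega
end

section
/- Sequential scheduling with destination blocking preserves order-contiguity: if agents are planned in an order such that all agents of label o precede all agents of label o' whenever o ≺ o' (for a strict linear order ≺ on labels), and agent i is forbidden from occupying its goal before time Γ_i := max over agents j with the same goal and higher-priority label of (T_j + k + 1), then, provided every agent's arrival time satisfies T_i ≥ Γ_i, the resulting arrival sequence at each destination is order-contiguous. -/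
/-- Destination blocking preserves order-contiguity: if every agent arrives no
earlier than `Γ_i` (i.e. strictly more than `k` steps after every same-goal agent of
a higher-priority label), then at each goal the label sequence sorted by arrival
time is order-contiguous. -/
theorem stmt_10 {A O Gd : Type*} [Fintype A] (o : A → O) (gl : A → Gd) (T : A → ℕ)
    (k : ℕ) (prec : O → O → Prop) [IsStrictTotalOrder O prec]
    (hinj : ∀ i j : A, gl i = gl j → T i = T j → i = j)
    (hΓ : ∀ i j : A, gl j = gl i → prec (o j) (o i) → T j + k + 1 ≤ T i) :
    ∀ (g : Gd) (p q r : A), gl p = g → gl q = g → gl r = g →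
      T p < T q → T q < T r → o p = o r → o p = o q := by
  intro g p q r hp hq hr hpq hqr hor
  rcases trichotomous_of prec (o p) (o q) with h | h | h
  · exact absurd (hΓ q r (hr.trans hq.symm) (hor ▸ h)) (by omega)
  · exact h
  · exact absurd (hΓ p q (hq.trans hp.symm) h) (by omega)
end
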